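/- arXiv:1709.05174 — 5 statements merged into one kernel-verified Lean document; each statement's English description precedes it below -/
import Mathlib

section
/- For any two pmfs p and q on a finite set S with total variation distance ‖p−q‖_TV < 1, the Chernoff information satisfies C(p‖q) ≤ −log(1 − ‖p−q‖_TV). -/
/-!
Pointwise, `min (p s) (q s) ≤ p s ^ α * q s ^ (1 - α)` for every `α ∈ [0, 1]`, since the right-hand
side is a weighted geometric mean of `p s` and `q s`. Summing over `s`, every candidate in the
minimisation defining the Chernoff information is at least `∑ s, min (p s) (q s)`, and this overlap
equals `1 - ‖p - q‖_TV` because `2 min a b = a + b - |a - b|`.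
-/

/-- A probability mass function on a finite set `S`. -/
def IsPMF {S : Type*} [Fintype S] (p : S → ℝ) : Prop :=
  (∀ s, 0 ≤ p s) ∧ ∑ s, p s = 1

/-- Total variation distance between two pmfs. -/
noncomputable def tvDist {S : Type*} [Fintype S] (p q : S → ℝ) : ℝ :=
  (1 / 2) * ∑ s, |p s - q s|

/-- Chernoff information between two pmfs, with real-power conventions
`0 ^ t = 0` for `t ≠ 0` and `0 ^ 0 = 1` (these are the `Real.rpow` conventions). -/
noncomputable def chernoffInfo {S : Type*} [Fintype S] (p q : S → ℝ) : ℝ :=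
  -Real.log (sInf { v : ℝ | ∃ α ∈ Set.Icc (0 : ℝ) 1, v = ∑ s, p s ^ α * q s ^ (1 - α) })

open Finset

lemma min_le_rpow_mul_rpow {a b α : ℝ} (ha : 0 ≤ a) (hb : 0 ≤ b) (h0 : 0 ≤ α) (h1 : α ≤ 1) :
    min a b ≤ a ^ α * b ^ (1 - α) := by
  have hm : 0 ≤ min a b := le_min ha hb
  calc min a b = min a b ^ (α + (1 - α)) := by rw [add_sub_cancel, Real.rpow_one]
    _ = min a b ^ α * min a b ^ (1 - α) := Real.rpow_add_of_nonneg hm h0 (sub_nonneg.2 h1)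
    _ ≤ a ^ α * b ^ (1 - α) := by
      gcongr
      · exact min_le_left a b
      · exact min_le_right a b

lemma sum_min_eq_one_sub_tvDist {S : Type*} [Fintype S] {p q : S → ℝ}
    (hp : ∑ s, p s = 1) (hq : ∑ s, q s = 1) :
    ∑ s, min (p s) (q s) = 1 - tvDist p q := by
  have two_min (a b : ℝ) : 2 * min a b = a + b - |a - b| := by
    linarith [min_add_max a b, max_sub_min_eq_abs a b, abs_sub_comm a b]
  have h2 : 2 * ∑ s, min (p s) (q s) = 2 * (1 - tvDist p q) := by
    rw [mul_sum, sum_congr rfl fun s _ => two_min (p s) (q s), sum_sub_distrib,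
      sum_add_distrib, hp, hq, tvDist]
    ring
  linarith

/-- `C(p‖q) ≤ -log(1 - ‖p - q‖_TV)` whenever `‖p - q‖_TV < 1`. -/
theorem chernoff_le_neg_log_one_sub_tv {S : Type*} [Fintype S] (p q : S → ℝ)
    (hp : IsPMF p) (hq : IsPMF q) (h : tvDist p q < 1) :
    chernoffInfo p q ≤ -Real.log (1 - tvDist p q) := by
  rw [chernoffInfo, neg_le_neg_iff]
  refine Real.log_le_log (sub_pos.2 h) (le_csInf ⟨_, 0, ⟨le_rfl, zero_le_one⟩, rfl⟩ ?_)
  rintro _ ⟨α, ⟨h0, h1⟩, rfl⟩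
  rw [← sum_min_eq_one_sub_tvDist hp.2 hq.2]
  exact sum_le_sum fun s _ => min_le_rpow_mul_rpow (hp.1 s) (hq.1 s) h0 h1
end

section
/- Let p be a pmf on X×Y (X, Y finite) whose marginals are strictly positive: Σ_y p(x,y) > 0 for every x and Σ_x p(x,y) > 0 for every y. Then ε₁(p) = max{ min_{(x,y)∈X×Y} δ(x,y) : δ : X×Y → [0,1] such that the |X|×|Y| matrix with entries p(x,y)·δ(x,y) has rank at most one }. -/
/-- The value assigned to a path `(x₁,y₁,…,x_k,y_k)` (indexed here by `Fin (m+1)`,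
so `k = m+1 ≥ 1`).  Subtraction in `Fin (m+1)` is cyclic, so the denominator is
`p(x₁,y_k) · ∏_{i=2}^k p(x_i,y_{i-1})`. -/
noncomputable def pathValue {X Y : Type*} [Fintype X] [Fintype Y] (p : X × Y → ℝ)
    {m : ℕ} (x : Fin (m + 1) → X) (y : Fin (m + 1) → Y) : ℝ :=
  ((∏ i, p (x i, y i)) / ∏ i, p (x i, y (i - 1))) ^ (1 / (m + 1 : ℝ))

/-- A path is admissible if the `x_i` are pairwise distinct, the `y_i` are pairwise
distinct, `p(x₁,y_k) > 0`, and `p(x_i,y_{i-1}) > 0` for `2 ≤ i ≤ k`. -/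
def IsAdmissiblePath {X Y : Type*} [Fintype X] [Fintype Y] (p : X × Y → ℝ)
    {m : ℕ} (x : Fin (m + 1) → X) (y : Fin (m + 1) → Y) : Prop :=
  Function.Injective x ∧ Function.Injective y ∧ ∀ i, 0 < p (x i, y (i - 1))

/-- `ε₁(p)`: the minimum value over all admissible paths. -/
noncomputable def eps1 {X Y : Type*} [Fintype X] [Fintype Y] (p : X × Y → ℝ) : ℝ :=
  sInf { v : ℝ | ∃ (m : ℕ) (x : Fin (m + 1) → X) (y : Fin (m + 1) → Y),
    IsAdmissiblePath p x y ∧ v = pathValue p x y }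

/-!
If `p·δ = u vᵀ`, then along an admissible path the products of `u x_i v y_i` and of
`u x_i v y_{i-1}` coincide, so `(min δ)^k · ∏ p(x_i, y_{i-1}) ≤ ∏ p(x_i, y_i)`: every feasible `δ`
has `min δ ≤ ε₁(p)`.

Conversely, if `p` vanishes somewhere, the positive marginals give a path of length two and
value `0`, and `δ = 0` is optimal. If `p > 0`, put `w = log p` and `L = log ε₁(p)`; it suffices to
find `a, b` with `w x y + L ≤ a x + b y ≤ w x y` and take `δ x y = exp (a x + b y) / p (x, y)`.
These are difference constraints, solvable as soon as no cycle of the associated exchange graph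
has negative cost (the potential is a shortest-walk length). A cycle through distinct rows and
distinct columns is an admissible path, whose cost is `k · (log (path value) - L) ≥ 0`, and any
other cycle splits at a repeated row or column into two shorter cycles of the same total cost.
-/

lemma List.exists_eq_append_of_not_nodup_map {α β : Type*} {f : α → β} {l : List α}
    (h : ¬ (l.map f).Nodup) : ∃ s b t a r, l = s ++ b :: t ++ a :: r ∧ f a = f b := by
  obtain ⟨z, hz⟩ : ∃ z, List.Sublist [z, z] (l.map f) := by
    simpa [List.nodup_iff_sublist] using h
  obtain ⟨l', hl', hmap⟩ := List.sublist_map_iff.mp hz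
  obtain ⟨b, a, rfl⟩ : ∃ b a, l' = [b, a] := by
    simpa [List.length_eq_two] using congrArg List.length hmap.symm
  obtain ⟨r₁, r₂, rfl, hb, ha⟩ := List.cons_sublist_iff.mp hl'
  obtain ⟨s, t, rfl⟩ := List.append_of_mem hb
  obtain ⟨t', r, rfl⟩ := List.append_of_mem (List.singleton_sublist.mp ha)
  simp only [List.map_cons, List.map_nil, List.cons.injEq, and_true] at hmap
  exact ⟨s, b, t ++ t', a, r, by simp, hmap.2.symm.trans hmap.1⟩

lemma Matrix.exists_eq_vecMulVec_of_rank_le_one {m n K : Type*} [Fintype n] [Field K]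
    (M : Matrix m n K) (h : M.rank ≤ 1) : ∃ (u : m → K) (v : n → K), M = vecMulVec u v := by
  classical
  obtain ⟨u, hu⟩ := finrank_le_one_iff.mp h
  choose v hv using fun j => hu ⟨M.mulVec (Pi.single j 1), LinearMap.mem_range_self _ _⟩
  refine ⟨u, v, Matrix.ext fun i j => ?_⟩
  have hcol := congrFun (congrArg Subtype.val (hv j)) i
  simp only [SetLike.val_smul, Pi.smul_apply, smul_eq_mul, mulVec_single_one] at hcol
  rw [vecMulVec_apply, mul_comm]
  exact hcol.symm

lemma IsPMF.exists_pos {S : Type*} [Fintype S] {p : S → ℝ} (hp : IsPMF p) : ∃ s, 0 < p s := by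
  obtain ⟨s, -, hs⟩ :=
    (Finset.sum_pos_iff_of_nonneg fun s _ => hp.1 s).mp (by rw [hp.2]; exact one_pos)
  exact ⟨s, hs⟩

lemma IsPMF.le_one {S : Type*} [Fintype S] {p : S → ℝ} (hp : IsPMF p) (s : S) : p s ≤ 1 :=
  hp.2 ▸ Finset.single_le_sum (fun s _ => hp.1 s) (Finset.mem_univ s)

namespace Eps1

section Cycles

variable {X Y : Type*} (w : X → Y → ℝ) (L : ℝ)

/- A list `[(x₁, y₁), …, (x_k, y_k)]` is a walk that starts in a column `y₀`, enters row `x_i`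
from column `y_{i-1}` and leaves it through column `y_i`, paying `w x_i y_i - w x_i y_{i-1} - L`.
It is a cycle when `y₀ = y_k`; for distinct rows and columns this is the cyclic indexing
`i - 1` of `pathValue`. -/
def stepCost (y' : Y) (a : X × Y) : ℝ := w a.1 a.2 - w a.1 y' - L

def walkCost : Y → List (X × Y) → ℝ
  | _, [] => 0
  | y, a :: l => stepCost w L y a + walkCost a.2 l

def cycleCost (l : List (X × Y)) : ℝ :=
  match l.getLast? with
  | none => 0
  | some a => walkCost w L a.2 l

lemma cycleCost_concat (l : List (X × Y)) (a : X × Y) :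
    cycleCost w L (l ++ [a]) = walkCost w L a.2 (l ++ [a]) := by
  simp [cycleCost]

lemma walkCost_append (y : Y) (s t : List (X × Y)) (b : X × Y) :
    walkCost w L y (s ++ b :: t) = walkCost w L y (s ++ [b]) + walkCost w L b.2 t := by
  induction s generalizing y with
  | nil => simp [walkCost]
  | cons a s ih => simp [walkCost, ih, add_assoc]

lemma walkCost_concat_of_fst_eq (y : Y) (s : List (X × Y)) {a b : X × Y} (h : a.1 = b.1) :
    walkCost w L y (s ++ [a]) = walkCost w L y (s ++ [b]) + (w a.1 a.2 - w b.1 b.2) := by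
  induction s generalizing y with
  | nil => simp only [List.nil_append, walkCost, stepCost, h]; ring
  | cons c s ih => simp only [List.cons_append, walkCost, ih]; ring

lemma cycleCost_append_cons_concat (s t : List (X × Y)) (a b : X × Y) :
    cycleCost w L (s ++ b :: t ++ [a]) =
      walkCost w L a.2 (s ++ [b]) + walkCost w L b.2 (t ++ [a]) := by
  rw [cycleCost_concat, List.append_assoc, List.cons_append, walkCost_append]

lemma cycleCost_append_comm (s t : List (X × Y)) :
    cycleCost w L (s ++ t) = cycleCost w L (t ++ s) := by
  rcases s.eq_nil_or_concat' with rfl | ⟨s, b, rfl⟩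
  · simp
  rcases t.eq_nil_or_concat' with rfl | ⟨t, a, rfl⟩
  · simp
  have key := cycleCost_append_cons_concat w L
  simp only [List.append_assoc, List.cons_append, List.nil_append] at key ⊢
  rw [key, key, add_comm]

lemma cycleCost_split_of_snd_eq (s t : List (X × Y)) {a b : X × Y} (h : a.2 = b.2) :
    cycleCost w L (s ++ b :: t ++ [a]) = cycleCost w L (s ++ [b]) + cycleCost w L (t ++ [a]) := by
  rw [cycleCost_append_cons_concat, cycleCost_concat, cycleCost_concat, h]

lemma cycleCost_split_of_fst_eq (s t : List (X × Y)) {a b : X × Y} (h : a.1 = b.1) :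
    cycleCost w L (s ++ b :: t ++ [a]) = cycleCost w L (s ++ [a]) + cycleCost w L (t ++ [b]) := by
  rw [cycleCost_append_cons_concat, cycleCost_concat, cycleCost_concat,
    walkCost_concat_of_fst_eq w L _ s h.symm, walkCost_concat_of_fst_eq w L _ t h]
  ring

lemma exists_cycleCost_eq_add {l : List (X × Y)}
    (h : ¬ (l.map Prod.fst).Nodup ∨ ¬ (l.map Prod.snd).Nodup) :
    ∃ l₁ l₂ : List (X × Y), l₁.length < l.length ∧ l₂.length < l.length ∧
      cycleCost w L l = cycleCost w L l₁ + cycleCost w L l₂ := by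
  have rotate (s t r : List (X × Y)) (a b : X × Y) :
      cycleCost w L (s ++ b :: t ++ a :: r) = cycleCost w L (r ++ s ++ b :: t ++ [a]) := by
    rw [show s ++ b :: t ++ a :: r = (s ++ b :: t ++ [a]) ++ r by simp, cycleCost_append_comm]
    simp only [List.append_assoc]
  rcases h with h | h <;> obtain ⟨s, b, t, a, r, rfl, hab⟩ := List.exists_eq_append_of_not_nodup_map h
  · refine ⟨r ++ s ++ [a], t ++ [b], by grind, by grind, ?_⟩
    rw [rotate, cycleCost_split_of_fst_eq w L _ _ hab]
  · refine ⟨r ++ s ++ [b], t ++ [a], by grind, by grind, ?_⟩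
    rw [rotate, cycleCost_split_of_snd_eq w L _ _ hab]

theorem cycleCost_nonneg
    (H : ∀ l : List (X × Y), (l.map Prod.fst).Nodup → (l.map Prod.snd).Nodup →
      0 ≤ cycleCost w L l)
    (l : List (X × Y)) : 0 ≤ cycleCost w L l := by
  induction hn : l.length using Nat.strong_induction_on generalizing l with
  | _ n ih =>
    by_cases hl : (l.map Prod.fst).Nodup ∧ (l.map Prod.snd).Nodup
    · exact H l hl.1 hl.2
    obtain ⟨l₁, l₂, h₁, h₂, hsum⟩ := exists_cycleCost_eq_add w L (not_and_or.mp hl)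
    rw [hsum]
    exact add_nonneg (ih _ (hn ▸ h₁) l₁ rfl) (ih _ (hn ▸ h₂) l₂ rfl)

lemma walkCost_ofFn (y : Y) {n : ℕ} (g : Fin (n + 1) → X × Y) :
    walkCost w L y (List.ofFn g) =
      stepCost w L y (g 0) + ∑ i : Fin n, stepCost w L (g i.castSucc).2 (g i.succ) := by
  induction n generalizing y with
  | zero => simp [walkCost]
  | succ n ih =>
    rw [List.ofFn_succ, walkCost, ih, Fin.sum_univ_succ]
    simp only [Fin.castSucc_zero, Fin.succ_castSucc]

lemma cycleCost_ofFn {n : ℕ} (g : Fin (n + 1) → X × Y) :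
    cycleCost w L (List.ofFn g) = ∑ i, stepCost w L (g i).2 (g (i + 1)) := by
  rw [List.ofFn_succ', List.concat_eq_append, cycleCost_concat, ← List.concat_eq_append,
    ← List.ofFn_succ', walkCost_ofFn, Fin.sum_univ_castSucc, Fin.last_add_one, add_comm]
  simp [Fin.coeSucc_eq_succ]

lemma exists_nodup_walkCost_le (H : ∀ l, 0 ≤ cycleCost w L l) {y : Y} {l : List (X × Y)}
    (hl : (y :: l.map Prod.snd).Nodup) (x : X) (y' : Y) :
    ∃ l' : List (X × Y), (y' :: l'.map Prod.snd).Nodup ∧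
      walkCost w L y' l' ≤ walkCost w L y' ((x, y) :: l) := by
  by_cases hy' : y' ∈ ((x, y) :: l).map Prod.snd
  · obtain ⟨b, hb, rfl⟩ := List.mem_map.mp hy'
    obtain ⟨s, t, hst⟩ := List.append_of_mem hb
    refine ⟨t, ?_, ?_⟩
    · rw [show y :: l.map Prod.snd = ((x, y) :: l).map Prod.snd from rfl, hst,
        List.map_append] at hl
      exact hl.of_append_right
    · rw [hst, walkCost_append, le_add_iff_nonneg_left, ← cycleCost_concat]
      exact H _
  · exact ⟨(x, y) :: l, List.nodup_cons.mpr ⟨hy', hl⟩, le_rfl⟩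

variable [Finite X] [Finite Y]

lemma finite_setOf_nodup_cons_map_snd (y : Y) :
    {l : List (X × Y) | (y :: l.map Prod.snd).Nodup}.Finite := by
  have := Fintype.ofFinite (X × Y)
  refine (List.finite_length_le (X × Y) (Fintype.card (X × Y))).subset fun l hl => ?_
  exact ((List.nodup_cons.mp hl).2.of_map _).length_le_card

theorem exists_potential (H : ∀ l, 0 ≤ cycleCost w L l) :
    ∃ ψ : Y → ℝ, ∀ x y y', ψ y' ≤ ψ y + stepCost w L y' (x, y) := by
  let S (y : Y) := walkCost w L y '' {l | (y :: l.map Prod.snd).Nodup}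
  have hbdd (y : Y) : BddBelow (S y) :=
    ((finite_setOf_nodup_cons_map_snd y).image _).bddBelow
  refine ⟨fun y => sInf (S y), fun x y y' => ?_⟩
  rw [← sub_le_iff_le_add]
  refine le_csInf ⟨0, [], by simp, rfl⟩ ?_
  rintro _ ⟨l, hl, rfl⟩
  obtain ⟨l', hl', hle⟩ := exists_nodup_walkCost_le w L H hl x y'
  rw [sub_le_iff_le_add, add_comm, ← walkCost]
  exact (csInf_le (hbdd y') ⟨l', hl', rfl⟩).trans hle

theorem exists_add_sandwich (H : ∀ l, 0 ≤ cycleCost w L l) :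
    ∃ (a : X → ℝ) (b : Y → ℝ), ∀ x y, w x y + L ≤ a x + b y ∧ a x + b y ≤ w x y := by
  obtain ⟨ψ, hψ⟩ := exists_potential w L H
  refine ⟨fun x => ⨅ y, (w x y + ψ y), fun y => -ψ y, fun x y => ⟨?_, ?_⟩⟩
  · have : Nonempty Y := ⟨y⟩
    have : w x y + ψ y + L ≤ ⨅ y', (w x y' + ψ y') := le_ciInf fun y' => by
      have := hψ x y' y
      simp only [stepCost] at this
      linarith
    linarith
  · have := ciInf_le (Set.finite_range fun y' => w x y' + ψ y').bddBelow y
    linarith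

end Cycles

variable {X Y : Type*} [Fintype X] [Fintype Y] {p : X × Y → ℝ}

lemma pathValue_nonneg (hp : ∀ s, 0 ≤ p s) {m : ℕ} (x : Fin (m + 1) → X)
    (y : Fin (m + 1) → Y) : 0 ≤ pathValue p x y :=
  Real.rpow_nonneg (div_nonneg (Finset.prod_nonneg fun _ _ => hp _)
    (Finset.prod_nonneg fun _ _ => hp _)) _

lemma le_pathValue_iff (hp : ∀ s, 0 ≤ p s) {m : ℕ} {x : Fin (m + 1) → X}
    {y : Fin (m + 1) → Y} (hadm : IsAdmissiblePath p x y) {c : ℝ} (hc : 0 ≤ c) :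
    c ≤ pathValue p x y ↔ c ^ (m + 1) * ∏ i, p (x i, y (i - 1)) ≤ ∏ i, p (x i, y i) := by
  have hD : 0 < ∏ i, p (x i, y (i - 1)) := Finset.prod_pos fun i _ => hadm.2.2 i
  rw [pathValue, one_div, Real.le_rpow_inv_iff_of_pos hc
    (div_nonneg (Finset.prod_nonneg fun _ _ => hp _) hD.le) (by positivity),
    ← Nat.cast_add_one, Real.rpow_natCast, le_div_iff₀ hD]

theorem iInf_le_pathValue (hp : ∀ s, 0 ≤ p s) {δ : X → Y → ℝ}
    (hδ : ∀ x y, δ x y ∈ Set.Icc (0 : ℝ) 1)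
    (hrank : (Matrix.of fun x y => p (x, y) * δ x y).rank ≤ 1)
    {m : ℕ} {x : Fin (m + 1) → X} {y : Fin (m + 1) → Y} (hadm : IsAdmissiblePath p x y) :
    ⨅ xy : X × Y, δ xy.1 xy.2 ≤ pathValue p x y := by
  have : Nonempty (X × Y) := ⟨(x 0, y 0)⟩
  obtain ⟨u, v, huv⟩ := Matrix.exists_eq_vecMulVec_of_rank_le_one _ hrank
  have hpδ (a : X) (b : Y) : p (a, b) * δ a b = u a * v b := by
    simpa [Matrix.vecMulVec_apply] using congrFun (congrFun huv a) b
  set c := ⨅ xy : X × Y, δ xy.1 xy.2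
  have hc0 : 0 ≤ c := le_ciInf fun _ => (hδ _ _).1
  have hcδ (a : X) (b : Y) : c ≤ δ a b := ciInf_le (Set.finite_range _).bddBelow (a, b)
  rw [le_pathValue_iff hp hadm hc0]
  calc c ^ (m + 1) * ∏ i, p (x i, y (i - 1))
      = ∏ i, p (x i, y (i - 1)) * c := by
        rw [Finset.prod_mul_distrib, Finset.prod_const, Finset.card_univ, Fintype.card_fin,
          mul_comm]
    _ ≤ ∏ i, p (x i, y (i - 1)) * δ (x i) (y (i - 1)) :=
        Finset.prod_le_prod (fun _ _ => mul_nonneg (hp _) hc0)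
          fun _ _ => mul_le_mul_of_nonneg_left (hcδ _ _) (hp _)
    _ = ∏ i, p (x i, y i) * δ (x i) (y i) := by
        simp only [hpδ, Finset.prod_mul_distrib]
        congr 1
        exact Fintype.prod_equiv (Equiv.subRight 1) _ _ fun _ => rfl
    _ ≤ ∏ i, p (x i, y i) :=
        Finset.prod_le_prod (fun _ _ => mul_nonneg (hp _) (hδ _ _).1)
          fun _ _ => mul_le_of_le_one_right (hp _) (hδ _ _).2

lemma sum_stepCost_log_nonneg (hpos : ∀ s, 0 < p s) {c : ℝ} (hc : 0 < c) {m : ℕ}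
    {x : Fin (m + 1) → X} {y : Fin (m + 1) → Y} (hadm : IsAdmissiblePath p x y)
    (h : c ≤ pathValue p x y) :
    0 ≤ ∑ i, stepCost (fun a b => Real.log (p (a, b))) (Real.log c) (y (i - 1)) (x i, y i) := by
  rw [le_pathValue_iff (fun s => (hpos s).le) hadm hc.le] at h
  have hD := Finset.prod_pos fun i (_ : i ∈ Finset.univ) => hpos (x i, y (i - 1))
  have hlog := Real.log_le_log (mul_pos (pow_pos hc _) hD) h
  rw [Real.log_mul (pow_pos hc _).ne' hD.ne', Real.log_pow,
    Real.log_prod fun _ _ => (hpos _).ne', Real.log_prod fun _ _ => (hpos _).ne'] at hlog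
  simp only [stepCost, Finset.sum_sub_distrib, Finset.sum_const, Finset.card_univ,
    Fintype.card_fin, nsmul_eq_mul]
  push_cast at hlog ⊢
  linarith

theorem cycleCost_log_nonneg (hpos : ∀ s, 0 < p s) {c : ℝ} (hc : 0 < c)
    (h : ∀ {m : ℕ} (x : Fin (m + 1) → X) (y : Fin (m + 1) → Y),
      IsAdmissiblePath p x y → c ≤ pathValue p x y)
    (l : List (X × Y)) : 0 ≤ cycleCost (fun a b => Real.log (p (a, b))) (Real.log c) l := by
  refine cycleCost_nonneg _ _ (fun l hx hy => ?_) l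
  rcases l with _ | ⟨a, l⟩
  · exact le_rfl
  set g : Fin (l.length + 1) → X × Y := (a :: l).get
  rw [← List.ofFn_get (a :: l), List.map_ofFn, List.nodup_ofFn] at hx hy
  have hadm : IsAdmissiblePath p (fun i => (g i).1) (fun i => (g i).2) :=
    ⟨hx, hy, fun _ => hpos _⟩
  rw [← List.ofFn_get (a :: l), cycleCost_ofFn _ _ (n := l.length) g,
    Fintype.sum_equiv (Equiv.addRight 1) _
      (fun i => stepCost (fun a b => Real.log (p (a, b))) (Real.log c) (g (i - 1)).2 (g i))
      fun _ => by simp]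
  exact sum_stepCost_log_nonneg hpos hc hadm (h _ _ hadm)

lemma isAdmissiblePath_single {x : X} {y : Y} (h : 0 < p (x, y)) :
    IsAdmissiblePath p (fun _ : Fin 1 => x) (fun _ => y) :=
  ⟨fun _ _ _ => Subsingleton.elim (α := Fin 1) _ _, fun _ _ _ => Subsingleton.elim (α := Fin 1) _ _,
    fun _ => h⟩

lemma eps1_nonneg (hp : ∀ s, 0 ≤ p s) : 0 ≤ eps1 p :=
  Real.sInf_nonneg <| by
    rintro _ ⟨m, x, y, -, rfl⟩
    exact pathValue_nonneg hp x y

lemma eps1_le_pathValue (hp : ∀ s, 0 ≤ p s) {m : ℕ} {x : Fin (m + 1) → X}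
    {y : Fin (m + 1) → Y} (hadm : IsAdmissiblePath p x y) : eps1 p ≤ pathValue p x y := by
  refine csInf_le ⟨0, ?_⟩ ⟨m, x, y, hadm, rfl⟩
  rintro _ ⟨m, x, y, -, rfl⟩
  exact pathValue_nonneg hp x y

lemma le_eps1 {s : X × Y} (hs : 0 < p s) {c : ℝ}
    (h : ∀ {m : ℕ} (x : Fin (m + 1) → X) (y : Fin (m + 1) → Y),
      IsAdmissiblePath p x y → c ≤ pathValue p x y) : c ≤ eps1 p := by
  refine le_csInf ⟨_, 0, _, _, isAdmissiblePath_single hs, rfl⟩ ?_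
  rintro _ ⟨m, x, y, hadm, rfl⟩
  exact h x y hadm

lemma eps1_pos (hp : IsPMF p) (hpos : ∀ s, 0 < p s) : 0 < eps1 p := by
  have : Nonempty (X × Y) := ⟨hp.exists_pos.choose⟩
  obtain ⟨s₀, hs₀⟩ := Finite.exists_min p
  refine (hpos s₀).trans_le (le_eps1 (hpos s₀) fun x y hadm => ?_)
  rw [le_pathValue_iff hp.1 hadm (hpos s₀).le]
  calc p s₀ ^ _ * ∏ i, p (x i, y (i - 1))
      ≤ p s₀ ^ _ * 1 := mul_le_mul_of_nonneg_left
        (Finset.prod_le_one (fun _ _ => hp.1 _) fun _ _ => hp.le_one _) (pow_pos (hpos s₀) _).le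
    _ = ∏ _i, p s₀ := by simp
    _ ≤ ∏ i, p (x i, y i) := Finset.prod_le_prod (fun _ _ => (hpos s₀).le) fun _ _ => hs₀ _

lemma eps1_eq_zero (hp : ∀ s, 0 ≤ p s) (hX : ∀ x, 0 < ∑ y, p (x, y))
    (hY : ∀ y, 0 < ∑ x, p (x, y)) {x₀ : X} {y₀ : Y} (h : p (x₀, y₀) = 0) : eps1 p = 0 := by
  obtain ⟨x₁, -, hx₁⟩ := (Finset.sum_pos_iff_of_nonneg fun x _ => hp (x, y₀)).mp (hY y₀)
  obtain ⟨y₁, -, hy₁⟩ := (Finset.sum_pos_iff_of_nonneg fun y _ => hp (x₀, y)).mp (hX x₀)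
  have hx : x₀ ≠ x₁ := by rintro rfl; simp_all
  have hy : y₀ ≠ y₁ := by rintro rfl; simp_all
  have hadm : IsAdmissiblePath p ![x₀, x₁] ![y₀, y₁] := by
    refine ⟨?_, ?_, Fin.forall_fin_two.mpr ⟨?_, ?_⟩⟩
    · intro i j hij
      fin_cases i <;> fin_cases j <;> simp_all
    · intro i j hij
      fin_cases i <;> fin_cases j <;> simp_all
    · simpa [show (0 : Fin 2) - 1 = 1 from rfl] using hy₁
    · simpa using hx₁
  refine le_antisymm ((eps1_le_pathValue hp hadm).trans_eq ?_) (eps1_nonneg hp)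
  simp [pathValue, h]

theorem exists_rank_le_one_eps1_le (hp : IsPMF p) (hpos : ∀ s, 0 < p s) :
    ∃ δ : X → Y → ℝ, (∀ x y, δ x y ∈ Set.Icc (0 : ℝ) 1) ∧
      (Matrix.of fun x y => p (x, y) * δ x y).rank ≤ 1 ∧ ∀ x y, eps1 p ≤ δ x y := by
  obtain ⟨a, b, hab⟩ := exists_add_sandwich _ _
    (cycleCost_log_nonneg hpos (eps1_pos hp hpos) fun _ _ => eps1_le_pathValue hp.1)
  have hsandwich (x : X) (y : Y) :
      eps1 p * p (x, y) ≤ Real.exp (a x) * Real.exp (b y) ∧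
        Real.exp (a x) * Real.exp (b y) ≤ p (x, y) := by
    rw [← Real.exp_add, ← Real.exp_log (hpos (x, y)), ← Real.exp_log (eps1_pos hp hpos),
      ← Real.exp_add, Real.exp_le_exp, Real.exp_le_exp, add_comm (Real.log _)]
    exact hab x y
  refine ⟨fun x y => Real.exp (a x) * Real.exp (b y) / p (x, y), fun x y => ⟨?_, ?_⟩, ?_,
    fun x y => ?_⟩
  · exact div_nonneg (by positivity) (hpos _).le
  · exact (div_le_one (hpos _)).mpr (hsandwich x y).2
  · convert Matrix.rank_vecMulVec_le (fun x => Real.exp (a x)) (fun y => Real.exp (b y)) using 2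
    ext x y
    simp [Matrix.vecMulVec_apply, mul_div_cancel₀ _ (hpos (x, y)).ne']
  · exact (le_div_iff₀ (hpos _)).mpr (hsandwich x y).1

end Eps1

/-- for a pmf `p` on `X × Y` with strictly positive marginals, `ε₁(p)` is
the maximum, over `δ : X×Y → [0,1]` such that the matrix `[p(x,y)·δ(x,y)]` has rank at
most one, of `min_{(x,y)} δ(x,y)`. -/
theorem eps1_eq_max_min_delta {X Y : Type*} [Fintype X] [Fintype Y]
    (p : X × Y → ℝ) (hp : IsPMF p)
    (hX : ∀ x, 0 < ∑ y, p (x, y)) (hY : ∀ y, 0 < ∑ x, p (x, y)) :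
    IsGreatest { v : ℝ | ∃ δ : X → Y → ℝ,
      (∀ x y, δ x y ∈ Set.Icc (0 : ℝ) 1) ∧
      (Matrix.of fun x y => p (x, y) * δ x y).rank ≤ 1 ∧
      v = ⨅ xy : X × Y, δ xy.1 xy.2 } (eps1 p) := by
  obtain ⟨s, hs⟩ := hp.exists_pos
  have : Nonempty (X × Y) := ⟨s⟩
  have hle (δ : X → Y → ℝ) (hδ : ∀ x y, δ x y ∈ Set.Icc (0 : ℝ) 1)
      (hrank : (Matrix.of fun x y => p (x, y) * δ x y).rank ≤ 1) :
      ⨅ xy : X × Y, δ xy.1 xy.2 ≤ eps1 p :=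
    Eps1.le_eps1 hs fun _ _ hadm => Eps1.iInf_le_pathValue hp.1 hδ hrank hadm
  refine ⟨?_, fun v ⟨δ, hδ, hrank, hv⟩ => hv ▸ hle δ hδ hrank⟩
  by_cases hpos : ∀ s, 0 < p s
  · obtain ⟨δ, hδ, hrank, hge⟩ := Eps1.exists_rank_le_one_eps1_le hp hpos
    exact ⟨δ, hδ, hrank, le_antisymm (le_ciInf fun s => hge s.1 s.2) (hle δ hδ hrank)⟩
  · push Not at hpos
    obtain ⟨⟨x, y⟩, hxy⟩ := hpos
    refine ⟨fun _ _ => 0, fun _ _ => by simp, ?_, ?_⟩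
    · exact (Matrix.rank_vecMulVec_le (0 : X → ℝ) (0 : Y → ℝ)).trans_eq'
        (by congr 1; ext; simp [Matrix.vecMulVec_apply])
    · rw [Eps1.eps1_eq_zero hp.1 hX hY (le_antisymm hxy (hp.1 _)), ciInf_const]
end

section
/- Let p be a pmf on X×Y (X, Y finite) with p(x,y) > 0 for all (x,y). Then ε₁(p) equals the minimum, over all pairs of pmfs μ, γ on X×Y having equal marginals (Σ_y μ(x,y) = Σ_y γ(x,y) for all x and Σ_x μ(x,y) = Σ_x γ(x,y) for all y), of Π_{(x,y)∈X×Y} p(x,y)^{γ(x,y) − μ(x,y)}. -/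
/-!
Write `f = log p` and `L = log ε₁(p)`, so that every admissible path `(x, y)` of length `k`
satisfies `k L ≤ ∑ᵢ (f (xᵢ, yᵢ) - f (xᵢ, yᵢ₋₁))`. If `μ` and `γ` have equal marginals, `γ - μ` is a
circulation on the complete bipartite graph between `X` and `Y`, so unless it vanishes it contains
an alternating cycle: a path along which `γ > μ` on the edges `(xᵢ, yᵢ)` and `γ < μ` on the edges
`(xᵢ, yᵢ₋₁)`. Subtracting the largest multiple `ε` of this cycle that keeps `γ` and `μ` nonnegative
keeps their marginals equal, shrinks the support of `γ - μ`, lowers `∑ γ` by `k ε` and lowers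
`∑ (γ - μ) f` by `ε` times the cycle sum, which is at least `k ε L`. By induction
`∑ (γ - μ) f ≥ L ∑ γ = L`, that is `∏ p ^ (γ - μ) ≥ ε₁(p)`; the uniform distributions on the two
edge sets of a minimising path attain equality.
-/

open Finset Function Real

theorem Finset.exists_lt_of_sum_eq_of_lt {ι M : Type*} [Fintype ι] [AddCommMonoid M]
    [LinearOrder M] [IsOrderedCancelAddMonoid M] {u v : ι → M}
    (h : ∑ i, u i = ∑ i, v i) {i : ι} (hi : u i < v i) : ∃ j, v j < u j := by
  by_contra! hvu
  exact (sum_lt_sum (fun j _ => hvu j) ⟨i, mem_univ i, hi⟩).ne h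

theorem Function.exists_mem_periodicPts {α : Type*} [Finite α] [Nonempty α] (f : α → α) :
    ∃ x, x ∈ periodicPts f := by
  obtain ⟨x⟩ := ‹Nonempty α›
  obtain ⟨m, n, hmn, heq⟩ := Finite.exists_ne_map_eq_of_infinite (f^[·] x)
  wlog hlt : m < n generalizing m n
  · exact this n m hmn.symm heq.symm (by omega)
  refine ⟨f^[m] x, mk_mem_periodicPts (n := n - m) (by omega) ?_⟩
  rw [IsPeriodicPt, IsFixedPt, ← iterate_add_apply, Nat.sub_add_cancel hlt.le]
  exact heq.symm

theorem Function.IsPeriodicPt.iterate_val_add_one {α : Type*} {f : α → α} {x : α} {m : ℕ}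
    (h : IsPeriodicPt f (m + 1) x) (i : Fin (m + 1)) : f^[↑(i + 1)] x = f (f^[i] x) := by
  rw [Fin.val_add, Fin.val_one', Nat.add_mod_mod, h.iterate_mod_apply, iterate_succ_apply']

theorem IsPMF.nonempty {S : Type*} [Fintype S] {p : S → ℝ} (hp : IsPMF p) : Nonempty S := by
  by_contra h
  rw [not_nonempty_iff] at h
  simpa using hp.2

theorem Real.prod_rpow_eq_exp_sum {ι : Type*} [Fintype ι] {p : ι → ℝ} (hpos : ∀ i, 0 < p i)
    (g : ι → ℝ) : ∏ i, p i ^ g i = exp (∑ i, g i * log (p i)) := by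
  rw [exp_sum]
  exact prod_congr rfl fun i _ => by rw [rpow_def_of_pos (hpos i), mul_comm]

section FiberCard

variable {ι α : Type*} [Fintype ι] [DecidableEq α]

def fiberCard (z : ι → α) (s : α) : ℝ := #{i | z i = s}

theorem sum_fiberCard_mul [Fintype α] (z : ι → α) (g : α → ℝ) :
    ∑ s, fiberCard z s * g s = ∑ i, g (z i) := by
  rw [← sum_fiberwise' univ z g]
  simp [fiberCard, sum_const, nsmul_eq_mul]

theorem sum_fiberCard [Fintype α] (z : ι → α) : ∑ s, fiberCard z s = Fintype.card ι := by
  simpa using sum_fiberCard_mul z 1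

theorem isPMF_fiberCard_div [Nonempty ι] [Fintype α] (z : ι → α) :
    IsPMF fun s => fiberCard z s / Fintype.card ι :=
  ⟨fun _ => div_nonneg (Nat.cast_nonneg _) (Nat.cast_nonneg _), by
    rw [← sum_div, sum_fiberCard, div_self (Nat.cast_ne_zero.2 Fintype.card_ne_zero)]⟩

theorem fiberCard_comp_equiv {κ : Type*} [Fintype κ] (z : ι → α) (e : κ ≃ ι) :
    fiberCard (z ∘ e) = fiberCard z := by
  ext s
  simp only [fiberCard, Function.comp_apply]
  congr 1
  exact card_equiv e (by simp)

theorem fiberCard_apply_of_injective {z : ι → α} (hz : Injective z) (i : ι) :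
    fiberCard z (z i) = 1 := by
  have : ({j | z j = z i} : Finset ι) = {i} := by ext j; simp [hz.eq_iff]
  simp [fiberCard, this]

theorem fiberCard_eq_zero {z : ι → α} {s : α} (h : ∀ i, z i ≠ s) : fiberCard z s = 0 := by
  simp [fiberCard, h]

theorem fiberCard_eq_zero_or_exists (z : ι → α) (s : α) :
    fiberCard z s = 0 ∨ ∃ i, z i = s := by
  by_cases h : ∃ i, z i = s
  · exact Or.inr h
  · exact Or.inl (fiberCard_eq_zero (not_exists.1 h))

variable {β : Type*} [DecidableEq β]

theorem sum_fiberCard_left [Fintype β] (z : ι → α × β) (a : α) :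
    ∑ b, fiberCard z (a, b) = fiberCard (Prod.fst ∘ z) a := by
  simp only [fiberCard, comp_apply]
  rw [card_eq_sum_card_fiberwise (f := fun i => (z i).2) (t := univ) (fun _ _ => mem_univ _)]
  push_cast
  simp only [filter_filter, Prod.ext_iff]

theorem sum_fiberCard_right [Fintype α] (z : ι → α × β) (b : β) :
    ∑ a, fiberCard z (a, b) = fiberCard (Prod.snd ∘ z) b := by
  simp only [fiberCard, comp_apply]
  rw [card_eq_sum_card_fiberwise (f := fun i => (z i).1) (t := univ) (fun _ _ => mem_univ _)]
  push_cast
  simp only [filter_filter, Prod.ext_iff, and_comm]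

end FiberCard

section Cycle

variable {X Y : Type*} {m : ℕ}

def cycleSum (f : X × Y → ℝ) (x : Fin (m + 1) → X) (y : Fin (m + 1) → Y) : ℝ :=
  ∑ i, (f (x i, y i) - f (x i, y (i - 1)))

theorem exists_alternating_cycle [Fintype X] [Fintype Y] {μ γ : X × Y → ℝ}
    (hrow : ∀ a, ∑ b, μ (a, b) = ∑ b, γ (a, b))
    (hcol : ∀ b, ∑ a, μ (a, b) = ∑ a, γ (a, b)) (hne : μ ≠ γ) :
    ∃ (m : ℕ) (x : Fin (m + 1) → X) (y : Fin (m + 1) → Y), Injective x ∧ Injective y ∧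
      (∀ i, μ (x i, y i) < γ (x i, y i)) ∧ ∀ i, γ (x i, y (i - 1)) < μ (x i, y (i - 1)) := by
  let S := {a : X // ∃ b, μ (a, b) < γ (a, b)}
  let T := {b : Y // ∃ a, μ (a, b) < γ (a, b)}
  have hST : ∀ a : S, ∃ b : T, μ (a, b) < γ (a, b) := fun ⟨a, b, hab⟩ => ⟨⟨b, a, hab⟩, hab⟩
  have hTS : ∀ b : T, ∃ a : S, γ (a, b) < μ (a, b) := by
    rintro ⟨b, a, hab⟩
    obtain ⟨a', ha'⟩ := exists_lt_of_sum_eq_of_lt (hcol b) hab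
    obtain ⟨b', hb'⟩ := exists_lt_of_sum_eq_of_lt (hrow a').symm ha'
    exact ⟨⟨a', b', hb'⟩, ha'⟩
  choose P hP using hST
  choose N hN using hTS
  have : Nonempty S := by
    obtain ⟨⟨a, b⟩, hab⟩ := Function.ne_iff.mp hne
    rcases hab.lt_or_gt with hab | hab
    · exact ⟨⟨a, b, hab⟩⟩
    · obtain ⟨a', ha'⟩ := exists_lt_of_sum_eq_of_lt (hcol b).symm hab
      exact ⟨⟨a', b, ha'⟩⟩
  -- a periodic orbit of `N ∘ P` traces an alternating cycle
  obtain ⟨a₀, ha₀⟩ := exists_mem_periodicPts (N ∘ P)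
  obtain ⟨m, hm⟩ :=
    Nat.exists_eq_add_one_of_ne_zero (minimalPeriod_pos_of_mem_periodicPts ha₀).ne'
  have hper : IsPeriodicPt (N ∘ P) (m + 1) a₀ := hm ▸ isPeriodicPt_minimalPeriod _ _
  let a : Fin (m + 1) → S := fun i => (N ∘ P)^[i] a₀
  have ha : Injective a := fun i j hij =>
    Fin.ext (iterate_injOn_Iio_minimalPeriod (by rw [Set.mem_Iio, hm]; exact i.is_lt)
      (by rw [Set.mem_Iio, hm]; exact j.is_lt) hij)
  have hsucc : ∀ i, a (i + 1) = N (P (a i)) := hper.iterate_val_add_one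
  refine ⟨m, fun i => a i, fun i => P (a i), Subtype.val_injective.comp ha, ?_,
    fun i => hP _, fun i => ?_⟩
  · intro i j hij
    have : a (i + 1) = a (j + 1) := by rw [hsucc, hsucc, Subtype.ext hij]
    exact add_right_cancel (ha this)
  · simpa only [← hsucc, sub_add_cancel] using hN (P (a (i - 1)))

section DecidableEq

variable [DecidableEq X] [DecidableEq Y]

theorem sum_fiberCard_cycle_left [Fintype Y] (x : Fin (m + 1) → X) (y : Fin (m + 1) → Y)
    (a : X) :
    ∑ b, fiberCard (fun i => (x i, y (i - 1))) (a, b) =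
      ∑ b, fiberCard (fun i => (x i, y i)) (a, b) := by
  rw [sum_fiberCard_left, sum_fiberCard_left]
  rfl

theorem sum_fiberCard_cycle_right [Fintype X] (x : Fin (m + 1) → X) (y : Fin (m + 1) → Y)
    (b : Y) :
    ∑ a, fiberCard (fun i => (x i, y (i - 1))) (a, b) =
      ∑ a, fiberCard (fun i => (x i, y i)) (a, b) := by
  rw [sum_fiberCard_right, sum_fiberCard_right]
  exact congrFun (fiberCard_comp_equiv y (Equiv.subRight 1)) b

theorem sum_fiberCard_cycle_sub_mul [Fintype X] [Fintype Y] (f : X × Y → ℝ)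
    (x : Fin (m + 1) → X) (y : Fin (m + 1) → Y) :
    ∑ s, (fiberCard (fun i => (x i, y i)) s - fiberCard (fun i => (x i, y (i - 1))) s) * f s =
      cycleSum f x y := by
  simp only [sub_mul, sum_sub_distrib, sum_fiberCard_mul, cycleSum]

theorem filter_ne_sub_fiberCard_subset [Fintype X] [Fintype Y] {μ γ : X × Y → ℝ}
    {x : Fin (m + 1) → X} {y : Fin (m + 1) → Y} (hlt : ∀ i, μ (x i, y i) < γ (x i, y i))
    (hgt : ∀ i, γ (x i, y (i - 1)) < μ (x i, y (i - 1))) (ε : ℝ) :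
    univ.filter (fun s => μ s - ε * fiberCard (fun i => (x i, y (i - 1))) s ≠
      γ s - ε * fiberCard (fun i => (x i, y i)) s) ⊆ univ.filter fun s => μ s ≠ γ s := by
  intro s
  simp only [mem_filter, mem_univ, true_and]
  refine mt fun hs => ?_
  rcases fiberCard_eq_zero_or_exists (fun i => (x i, y (i - 1))) s with hb | ⟨i, rfl⟩
  · rcases fiberCard_eq_zero_or_exists (fun i => (x i, y i)) s with hf | ⟨i, rfl⟩
    · rw [hb, hf, hs]
    · exact absurd hs (hlt i).ne
  · exact absurd hs (hgt i).ne'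

theorem exists_cancel_cycle [Fintype X] [Fintype Y] {μ γ : X × Y → ℝ} (hμ : ∀ s, 0 ≤ μ s)
    (hγ : ∀ s, 0 ≤ γ s) {x : Fin (m + 1) → X} {y : Fin (m + 1) → Y} (hx : Injective x)
    (hlt : ∀ i, μ (x i, y i) < γ (x i, y i))
    (hgt : ∀ i, γ (x i, y (i - 1)) < μ (x i, y (i - 1))) :
    ∃ ε ≥ 0, (∀ s, 0 ≤ μ s - ε * fiberCard (fun i => (x i, y (i - 1))) s) ∧
      (∀ s, 0 ≤ γ s - ε * fiberCard (fun i => (x i, y i)) s) ∧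
      #{s | μ s - ε * fiberCard (fun i => (x i, y (i - 1))) s ≠
        γ s - ε * fiberCard (fun i => (x i, y i)) s} < #{s | μ s ≠ γ s} := by
  have hdisj : ∀ i j, (x i, y i) ≠ (x j, y (j - 1)) := fun i j h =>
    (hlt i).not_gt (h ▸ hgt j)
  have hEf : ∀ i, fiberCard (fun i => (x i, y i)) (x i, y i) = 1 :=
    fiberCard_apply_of_injective fun i j h => hx (congrArg Prod.fst h)
  have hEb : ∀ i, fiberCard (fun i => (x i, y (i - 1))) (x i, y (i - 1)) = 1 :=
    fiberCard_apply_of_injective fun i j h => hx (congrArg Prod.fst h)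
  obtain ⟨i₀, -, hi₀⟩ := exists_min_image univ
    (fun i => min (γ (x i, y i) - μ (x i, y i)) (μ (x i, y (i - 1)) - γ (x i, y (i - 1))))
    univ_nonempty
  set ε :=
    min (γ (x i₀, y i₀) - μ (x i₀, y i₀)) (μ (x i₀, y (i₀ - 1)) - γ (x i₀, y (i₀ - 1)))
  have hεf : ∀ i, ε ≤ γ (x i, y i) - μ (x i, y i) := fun i =>
    (hi₀ i (mem_univ i)).trans (min_le_left _ _)
  have hεb : ∀ i, ε ≤ μ (x i, y (i - 1)) - γ (x i, y (i - 1)) := fun i =>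
    (hi₀ i (mem_univ i)).trans (min_le_right _ _)
  refine ⟨ε, (lt_min (sub_pos.2 (hlt i₀)) (sub_pos.2 (hgt i₀))).le, fun s => ?_, fun s => ?_,
    ?_⟩
  · rcases fiberCard_eq_zero_or_exists (fun i => (x i, y (i - 1))) s with h | ⟨i, rfl⟩
    · rw [h, mul_zero, sub_zero]
      exact hμ s
    · rw [hEb i]
      linarith [hεb i, hγ (x i, y (i - 1))]
  · rcases fiberCard_eq_zero_or_exists (fun i => (x i, y i)) s with h | ⟨i, rfl⟩
    · rw [h, mul_zero, sub_zero]
      exact hγ s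
    · rw [hEf i]
      linarith [hεf i, hμ (x i, y i)]
  · have hEb_f : ∀ i, fiberCard (fun i => (x i, y (i - 1))) (x i, y i) = 0 := fun i =>
      fiberCard_eq_zero fun j h => hdisj i j h.symm
    have hEf_b : ∀ i, fiberCard (fun i => (x i, y i)) (x i, y (i - 1)) = 0 := fun i =>
      fiberCard_eq_zero fun j => hdisj j i
    refine card_lt_card
      ((ssubset_iff_of_subset (filter_ne_sub_fiberCard_subset hlt hgt ε)).2 ?_)
    rcases min_cases (γ (x i₀, y i₀) - μ (x i₀, y i₀))
        (μ (x i₀, y (i₀ - 1)) - γ (x i₀, y (i₀ - 1))) with ⟨hε, -⟩ | ⟨hε, -⟩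
    · refine ⟨(x i₀, y i₀), by simpa using (hlt i₀).ne, ?_⟩
      simp only [mem_filter, mem_univ, true_and, not_not, hEb_f, hEf]
      linarith
    · refine ⟨(x i₀, y (i₀ - 1)), by simpa using (hgt i₀).ne', ?_⟩
      simp only [mem_filter, mem_univ, true_and, not_not, hEf_b, hEb]
      linarith

end DecidableEq

theorem mul_sum_le_sum_sub_mul_of_forall_cycleSum [Fintype X] [Fintype Y] (f : X × Y → ℝ)
    {L : ℝ} (hL0 : L ≤ 0)
    (hL : ∀ (m : ℕ) (x : Fin (m + 1) → X) (y : Fin (m + 1) → Y), Injective x → Injective y →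
      (m + 1) * L ≤ cycleSum f x y)
    {μ γ : X × Y → ℝ} (hμ : ∀ s, 0 ≤ μ s) (hγ : ∀ s, 0 ≤ γ s)
    (hrow : ∀ a, ∑ b, μ (a, b) = ∑ b, γ (a, b)) (hcol : ∀ b, ∑ a, μ (a, b) = ∑ a, γ (a, b)) :
    L * ∑ s, γ s ≤ ∑ s, (γ s - μ s) * f s := by
  classical
  induction hn : #{s | μ s ≠ γ s} using Nat.strong_induction_on generalizing μ γ with
  | _ n ih =>
  by_cases hμγ : μ = γ
  · subst hμγ
    simpa using mul_nonpos_of_nonpos_of_nonneg hL0 (sum_nonneg fun s _ => hγ s)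
  obtain ⟨m, x, y, hx, hy, hlt, hgt⟩ := exists_alternating_cycle hrow hcol hμγ
  obtain ⟨ε, hε, hμ', hγ', hcard⟩ := exists_cancel_cycle hμ hγ hx hlt hgt
  have ih' := ih _ (hn ▸ hcard) hμ' hγ' (fun a => ?_) (fun b => ?_) rfl
  · calc L * ∑ s, γ s
        = L * ∑ s, (γ s - ε * fiberCard (fun i => (x i, y i)) s) + ε * ((m + 1) * L) := by
          rw [sum_sub_distrib, ← mul_sum, sum_fiberCard]
          simp only [Fintype.card_fin, Nat.cast_add, Nat.cast_one]
          ring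
      _ ≤ ∑ s, ((γ s - ε * fiberCard (fun i => (x i, y i)) s) -
            (μ s - ε * fiberCard (fun i => (x i, y (i - 1))) s)) * f s + ε * cycleSum f x y :=
          add_le_add ih' (mul_le_mul_of_nonneg_left (hL m x y hx hy) hε)
      _ = ∑ s, (γ s - μ s) * f s := by
          rw [← sum_fiberCard_cycle_sub_mul, mul_sum, ← sum_add_distrib]
          exact sum_congr rfl fun s _ => by ring
  · rw [sum_sub_distrib, sum_sub_distrib, ← mul_sum, ← mul_sum, hrow,
      sum_fiberCard_cycle_left]
  · rw [sum_sub_distrib, sum_sub_distrib, ← mul_sum, ← mul_sum, hcol,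
      sum_fiberCard_cycle_right]

end Cycle

section PathValue

variable {X Y : Type*} {m : ℕ} [Fintype X] [Fintype Y] {p : X × Y → ℝ}

theorem pathValue_eq_exp (hpos : ∀ s, 0 < p s) (x : Fin (m + 1) → X) (y : Fin (m + 1) → Y) :
    pathValue p x y = exp (cycleSum (fun s => log (p s)) x y / (m + 1)) := by
  have hprod : ∀ z : Fin (m + 1) → X × Y, 0 < ∏ i, p (z i) := fun z =>
    prod_pos fun i _ => hpos (z i)
  rw [pathValue, rpow_def_of_pos (div_pos (hprod _) (hprod _)),
    log_div (hprod _).ne' (hprod _).ne', log_prod fun i _ => (hpos _).ne',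
    log_prod fun i _ => (hpos _).ne', cycleSum, sum_sub_distrib]
  ring_nf

def pathValues (p : X × Y → ℝ) : Set ℝ :=
  {v | ∃ (m : ℕ) (x : Fin (m + 1) → X) (y : Fin (m + 1) → Y),
    IsAdmissiblePath p x y ∧ v = pathValue p x y}

theorem pathValues_finite (p : X × Y → ℝ) : (pathValues p).Finite := by
  refine (Set.finite_range fun q : Σ k : Fin (Fintype.card X),
    (Fin (k + 1) → X) × (Fin (k + 1) → Y) => pathValue p q.2.1 q.2.2).subset ?_
  rintro v ⟨m, x, y, ⟨hx, -⟩, rfl⟩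
  have hm : m + 1 ≤ Fintype.card X := by simpa using Fintype.card_le_of_injective x hx
  exact ⟨⟨⟨m, by omega⟩, x, y⟩, rfl⟩

theorem eps1_le_pathValue {x : Fin (m + 1) → X} {y : Fin (m + 1) → Y}
    (h : IsAdmissiblePath p x y) : eps1 p ≤ pathValue p x y :=
  csInf_le (pathValues_finite p).bddBelow ⟨m, x, y, h, rfl⟩

theorem one_mem_pathValues [Nonempty X] [Nonempty Y] (hpos : ∀ s, 0 < p s) :
    (1 : ℝ) ∈ pathValues p := by
  refine ⟨0, fun _ => Classical.arbitrary X, fun _ => Classical.arbitrary Y,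
    ⟨fun _ _ _ => Subsingleton.elim (α := Fin 1) _ _,
      fun _ _ _ => Subsingleton.elim (α := Fin 1) _ _, fun _ => hpos _⟩, ?_⟩
  simp [pathValue_eq_exp hpos, cycleSum]

theorem eps1_mem_pathValues [Nonempty X] [Nonempty Y] (hpos : ∀ s, 0 < p s) :
    eps1 p ∈ pathValues p :=
  Set.Nonempty.csInf_mem ⟨1, one_mem_pathValues hpos⟩ (pathValues_finite p)

theorem eps1_pos [Nonempty X] [Nonempty Y] (hpos : ∀ s, 0 < p s) : 0 < eps1 p := by
  obtain ⟨m, x, y, -, h⟩ := eps1_mem_pathValues hpos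
  rw [h, pathValue_eq_exp hpos]
  exact exp_pos _

theorem log_eps1_nonpos [Nonempty X] [Nonempty Y] (hpos : ∀ s, 0 < p s) : log (eps1 p) ≤ 0 :=
  log_nonpos (eps1_pos hpos).le
    (csInf_le (pathValues_finite p).bddBelow (one_mem_pathValues hpos))

theorem mul_log_eps1_le_cycleSum (hpos : ∀ s, 0 < p s) {x : Fin (m + 1) → X}
    {y : Fin (m + 1) → Y} (hx : Injective x) (hy : Injective y) :
    (m + 1) * log (eps1 p) ≤ cycleSum (fun s => log (p s)) x y := by
  have : Nonempty X := ⟨x 0⟩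
  have : Nonempty Y := ⟨y 0⟩
  have h := log_le_log (eps1_pos hpos) (eps1_le_pathValue ⟨hx, hy, fun _ => hpos _⟩)
  rw [pathValue_eq_exp hpos, log_exp, le_div_iff₀ (by positivity)] at h
  linarith

def pmfPairValues (p : X × Y → ℝ) : Set ℝ :=
  {v | ∃ μ γ : X × Y → ℝ, IsPMF μ ∧ IsPMF γ ∧ (∀ x, ∑ y, μ (x, y) = ∑ y, γ (x, y)) ∧
    (∀ y, ∑ x, μ (x, y) = ∑ x, γ (x, y)) ∧ v = ∏ s : X × Y, p s ^ (γ s - μ s)}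

theorem pathValue_mem_pmfPairValues (hpos : ∀ s, 0 < p s) (x : Fin (m + 1) → X)
    (y : Fin (m + 1) → Y) : pathValue p x y ∈ pmfPairValues p := by
  classical
  refine ⟨fun s => fiberCard (fun i => (x i, y (i - 1))) s / Fintype.card (Fin (m + 1)),
    fun s => fiberCard (fun i => (x i, y i)) s / Fintype.card (Fin (m + 1)),
    isPMF_fiberCard_div _, isPMF_fiberCard_div _, fun a => ?_, fun b => ?_, ?_⟩
  · simp only [← sum_div, sum_fiberCard_cycle_left]
  · simp only [← sum_div, sum_fiberCard_cycle_right]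
  · rw [prod_rpow_eq_exp_sum hpos, pathValue_eq_exp hpos, ← sum_fiberCard_cycle_sub_mul,
      Fintype.card_fin, sum_div]
    congr 1
    refine sum_congr rfl fun s _ => ?_
    push_cast
    ring

end PathValue

/-- for a fully supported pmf `p` on `X × Y`, `ε₁(p)` is the minimum,
over pairs of pmfs `(μ, γ)` on `X × Y` with equal marginals, of
`∏_{(x,y)} p(x,y)^{γ(x,y) − μ(x,y)}`. -/
theorem eps1_eq_min_prod {X Y : Type*} [Fintype X] [Fintype Y]
    (p : X × Y → ℝ) (hp : IsPMF p) (hpos : ∀ s, 0 < p s) :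
    IsLeast { v : ℝ | ∃ μ γ : X × Y → ℝ, IsPMF μ ∧ IsPMF γ ∧
      (∀ x, ∑ y, μ (x, y) = ∑ y, γ (x, y)) ∧
      (∀ y, ∑ x, μ (x, y) = ∑ x, γ (x, y)) ∧
      v = ∏ s : X × Y, p s ^ (γ s - μ s) } (eps1 p) := by
  obtain ⟨a, b⟩ := hp.nonempty.some
  have : Nonempty X := ⟨a⟩
  have : Nonempty Y := ⟨b⟩
  refine ⟨?_, ?_⟩
  · obtain ⟨m, x, y, -, hmin⟩ := eps1_mem_pathValues hpos
    rw [hmin]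
    exact pathValue_mem_pmfPairValues hpos x y
  · rintro v ⟨μ, γ, hμ, hγ, hrow, hcol, rfl⟩
    have key := mul_sum_le_sum_sub_mul_of_forall_cycleSum _ (log_eps1_nonpos hpos)
      (fun _ _ _ => mul_log_eps1_le_cycleSum hpos) hμ.1 hγ.1 hrow hcol
    rw [hγ.2, mul_one] at key
    calc eps1 p = exp (log (eps1 p)) := (exp_log (eps1_pos hpos)).symm
      _ ≤ exp (∑ s, (γ s - μ s) * log (p s)) := exp_le_exp.2 key
      _ = ∏ s, p s ^ (γ s - μ s) := (prod_rpow_eq_exp_sum hpos _).symm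
end

section
/- Let X, Y be finite sets, W a channel from X to Y, and p_X a pmf on X with p_X(x) > 0 for all x. Then η(W) equals the supremum, over all finite sets V, U and all joint pmfs p on V×U×X×Y of the form p(v,u,x,y) = p(v,u,x)·W(y|x) whose X-marginal is p_X and which additionally satisfy the Markov condition p(x|v,u) = p(x|u) whenever defined, with I(U;X|V) > 0, of the ratio I(U;Y|V)/I(U;X|V). -/
/-- Mutual information `I(A;B)` of a joint (sub)pmf on `A × B`, with the convention
`0·log 0 = 0` (automatic for real multiplication since `Real.log 0 = 0`). -/
noncomputable def MI {A B : Type} [Fintype A] [Fintype B] (p : A → B → ℝ) : ℝ :=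
  ∑ a, ∑ b, p a b * Real.log (p a b / ((∑ b', p a b') * (∑ a', p a' b)))

/-- Conditional mutual information `I(A;B|V) = Σ_v p(v)·I(A;B|V=v)` of a joint
(sub)pmf on `V × A × B`. -/
noncomputable def condMI {V A B : Type} [Fintype V] [Fintype A] [Fintype B]
    (p : V → A → B → ℝ) : ℝ :=
  ∑ v, (∑ a, ∑ b, p v a b) * MI (fun a b => p v a b / (∑ a', ∑ b', p v a' b'))

/-- The strong data processing constant `s*(qA, W)`: the supremum over finite sets `U`
and channels `p(u|a)` with `I(U;A) > 0` of `I(U;B)/I(U;A)`, computed under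
`qA(a)·W(b|a)·p(u|a)`. -/
noncomputable def sdpc {A B : Type} [Fintype A] [Fintype B]
    (qA : A → ℝ) (W : A → B → ℝ) : ℝ :=
  sSup { r : ℝ | ∃ (U : Type) (iU : Fintype U) (pu : A → U → ℝ), by
    letI := iU
    exact (∀ a, IsPMF (pu a)) ∧
      0 < MI (fun u a => qA a * pu a u) ∧
      r = MI (fun u b => ∑ a, qA a * pu a u * W a b) / MI (fun u a => qA a * pu a u) }

/-- `η(W) = max_{q} s*(q, W)`, the maximum of the strong data processing constant
over input pmfs. -/
noncomputable def eta {A B : Type} [Fintype A] [Fintype B] (W : A → B → ℝ) : ℝ :=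
  sSup { r : ℝ | ∃ qA : A → ℝ, IsPMF qA ∧ r = sdpc qA W }

/-!
Lower bound: a channel `p(u|x)` under an arbitrary input `q` is embedded into a joint law with
`X`-marginal `p_X` by mixing. With probability `t`, set `V = true` and draw `(U, X)` from
`q(x) p(u|x)`; otherwise set `V = false`, `U = none` and draw `X` from `(p_X - t q) / (1 - t)`,
a pmf for small `t > 0` because `p_X > 0`. Both `I(U;X|V)` and `I(U;Y|V)` equal `t` times the
unconditional informations, so the ratio is unchanged.

Upper bound: given `V = v`, the pair `(U, X)` is a joint law fed through `W`, so
`I(U;Y|V=v) ≤ s*(p_{X|V=v}, W) · I(U;X|V=v) ≤ η(W) · I(U;X|V=v)`; average over `v`.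
-/

open Finset Real Filter Topology

theorem mul_log_add_sub_le_mul_log_div {a b c : ℝ} (ha : 0 ≤ a) (hb : 0 ≤ b)
    (hab : 0 < a → 0 < b) (hc : 0 < c) :
    a * log c + a - b * c ≤ a * log (a / b) := by
  rcases ha.eq_or_lt with rfl | ha
  · simpa using mul_nonneg hb hc.le
  have hb := hab ha
  have h := mul_le_mul_of_nonneg_left
    (one_sub_inv_le_log_of_pos (show 0 < a / (b * c) by positivity)) ha.le
  rw [log_div ha.ne' (by positivity), log_mul hb.ne' hc.ne', inv_div,
    mul_sub, mul_one, mul_div_cancel₀ _ ha.ne'] at h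
  rw [log_div ha.ne' hb.ne']
  linarith

theorem sum_mul_log_sum_div_sum_le {ι : Type*} (s : Finset ι) {a b : ι → ℝ}
    (ha : ∀ i ∈ s, 0 ≤ a i) (hb : ∀ i ∈ s, 0 ≤ b i) (hab : ∀ i ∈ s, 0 < a i → 0 < b i) :
    (∑ i ∈ s, a i) * log ((∑ i ∈ s, a i) / ∑ i ∈ s, b i) ≤
      ∑ i ∈ s, a i * log (a i / b i) := by
  rcases (sum_nonneg ha).eq_or_lt with hA | hA
  · have ha0 := (sum_eq_zero_iff_of_nonneg ha).1 hA.symm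
    rw [← hA, zero_mul]
    exact (sum_eq_zero fun i hi => by rw [ha0 i hi, zero_mul]).ge
  have hA' : ∑ i ∈ s, (0 : ℝ) < ∑ i ∈ s, a i := by rwa [sum_const_zero]
  obtain ⟨i, hi, hai⟩ := exists_lt_of_sum_lt hA'
  have hB : 0 < ∑ i ∈ s, b i := sum_pos' hb ⟨i, hi, hab i hi hai⟩
  calc (∑ i ∈ s, a i) * log ((∑ i ∈ s, a i) / ∑ i ∈ s, b i)
      = ∑ i ∈ s, (a i * log ((∑ i ∈ s, a i) / ∑ i ∈ s, b i) + a i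
          - b i * ((∑ i ∈ s, a i) / ∑ i ∈ s, b i)) := by
        rw [sum_sub_distrib, sum_add_distrib, ← sum_mul, ← sum_mul, mul_div_cancel₀ _ hB.ne']
        ring
    _ ≤ ∑ i ∈ s, a i * log (a i / b i) :=
        sum_le_sum fun i hi =>
          mul_log_add_sub_le_mul_log_div (ha i hi) (hb i hi) (hab i hi) (by positivity)

section MutualInformation

variable {A B : Type} [Fintype A] [Fintype B]

theorem MI_nonneg {p : A → B → ℝ} (hp : ∀ a b, 0 ≤ p a b) (hp1 : ∑ a, ∑ b, p a b = 1) :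
    0 ≤ MI p := by
  have hprod : ∑ a, ∑ b, (∑ b', p a b') * ∑ a', p a' b = 1 := by
    rw [← sum_mul_sum, hp1, sum_comm, hp1, one_mul]
  have key := sum_mul_log_sum_div_sum_le univ (a := fun x : A × B => p x.1 x.2)
    (b := fun x => (∑ b', p x.1 b') * ∑ a', p a' x.2) (fun x _ => hp x.1 x.2)
    (fun x _ => mul_nonneg (sum_nonneg fun b _ => hp x.1 b) (sum_nonneg fun a _ => hp a x.2))
    (fun x _ hx => mul_pos (hx.trans_le (single_le_sum (fun b _ => hp x.1 b) (mem_univ _)))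
      (hx.trans_le (single_le_sum (fun a _ => hp a x.2) (mem_univ _))))
  simp only [Fintype.sum_prod_type] at key
  rwa [hprod, hp1, div_one, log_one, mul_zero] at key

theorem sum_sum_comp {U X : Type} [Fintype U] [Fintype X] (p : U → X → ℝ) {W : X → B → ℝ}
    (hW : ∀ x, ∑ b, W x b = 1) :
    ∑ u, ∑ b, ∑ x, p u x * W x b = ∑ u, ∑ x, p u x := by
  refine sum_congr rfl fun u _ => ?_
  rw [sum_comm]
  simp_rw [← mul_sum, hW, mul_one]

theorem MI_comp_le {U : Type} [Fintype U] {p : U → A → ℝ} {W : A → B → ℝ}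
    (hp : ∀ u a, 0 ≤ p u a) (hW : ∀ a, IsPMF (W a)) :
    MI (fun u b => ∑ a, p u a * W a b) ≤ MI p := by
  have hW1 : ∀ a, ∑ b, W a b = 1 := fun a => (hW a).2
  set pU : U → ℝ := fun u => ∑ a, p u a
  set pA : A → ℝ := fun a => ∑ u, p u a
  have hpU : ∀ u, 0 ≤ pU u := fun u => sum_nonneg fun a _ => hp u a
  have hpA : ∀ a, 0 ≤ pA a := fun a => sum_nonneg fun u _ => hp u a
  have hcell : ∀ u b,
      (∑ a, p u a * W a b) * log ((∑ a, p u a * W a b) /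
        ((∑ b', ∑ a, p u a * W a b') * ∑ u', ∑ a, p u' a * W a b))
      ≤ ∑ a, p u a * W a b * log (p u a / (pU u * pA a)) := by
    intro u b
    have hden : (∑ b', ∑ a, p u a * W a b') * (∑ u', ∑ a, p u' a * W a b)
        = ∑ a, pU u * pA a * W a b := by
      rw [sum_comm (s := univ (α := B)), sum_comm (s := univ (α := U))]
      simp_rw [← mul_sum, hW1, mul_one, ← sum_mul]
      rw [mul_sum]
      simp_rw [← mul_assoc]
      rfl
    rw [hden]
    refine (sum_mul_log_sum_div_sum_le univ (fun a _ => mul_nonneg (hp u a) ((hW a).1 b))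
      (fun a _ => mul_nonneg (mul_nonneg (hpU u) (hpA a)) ((hW a).1 b)) fun a _ h => ?_).trans_eq
      (sum_congr rfl fun a _ => ?_)
    · have hpa := pos_of_mul_pos_left h ((hW a).1 b)
      exact mul_pos (mul_pos (hpa.trans_le (single_le_sum (fun a _ => hp u a) (mem_univ a)))
        (hpa.trans_le (single_le_sum (fun u _ => hp u a) (mem_univ u))))
        (pos_of_mul_pos_right h (hp u a))
    · rcases ((hW a).1 b).eq_or_lt with h | h
      · rw [← h]; simp
      · rw [mul_div_mul_right _ _ h.ne']
  calc MI (fun u b => ∑ a, p u a * W a b)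
      ≤ ∑ u, ∑ b, ∑ a, p u a * W a b * log (p u a / (pU u * pA a)) :=
        sum_le_sum fun u _ => sum_le_sum fun b _ => hcell u b
    _ = MI p := by
        refine sum_congr rfl fun u _ => ?_
        rw [sum_comm]
        simp_rw [← sum_mul, ← mul_sum, hW1, mul_one]
        rfl

theorem MI_mul_eq_zero {r : A → ℝ} {s : B → ℝ} (hr : ∑ a, r a = 1) (hs : ∑ b, s b = 1) :
    MI (fun a b => r a * s b) = 0 := by
  refine sum_eq_zero fun a _ => sum_eq_zero fun b _ => ?_
  dsimp only
  rw [← mul_sum, hs, mul_one, ← sum_mul, hr, one_mul]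
  by_cases h : r a * s b = 0
  · rw [h, zero_mul]
  · rw [div_self h, log_one, mul_zero]

theorem MI_option {p : Option A → B → ℝ} (h : ∀ b, p none b = 0) :
    MI p = MI (fun a b => p (some a) b) := by
  simp only [MI, Fintype.sum_option, h, zero_mul, sum_const_zero, zero_add]

end MutualInformation

section ConditionalMutualInformation

variable {V A B : Type} [Fintype V] [Fintype A] [Fintype B]

theorem sum_sum_div_self {p : A → B → ℝ} (h : ∑ a, ∑ b, p a b ≠ 0) :
    ∑ a, ∑ b, p a b / ∑ a', ∑ b', p a' b' = 1 := by
  simp_rw [← sum_div]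
  exact div_self h

theorem condMI_nonneg {q : V → A → B → ℝ} (hq : ∀ v a b, 0 ≤ q v a b) : 0 ≤ condMI q := by
  refine sum_nonneg fun v _ => ?_
  rcases (sum_nonneg fun a _ => sum_nonneg fun b _ => hq v a b).eq_or_lt with hm | hm
  · rw [← hm, zero_mul]
  · exact mul_nonneg hm.le
      (MI_nonneg (fun a b => div_nonneg (hq v a b) hm.le) (sum_sum_div_self hm.ne'))

theorem condMI_comp_le_mul {X : Type} [Fintype X] {q : V → A → X → ℝ} {W : X → B → ℝ}
    (hq : ∀ v a x, 0 ≤ q v a x) (hW : ∀ x, ∑ b, W x b = 1) {c : ℝ}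
    (hc : ∀ p : A → X → ℝ, (∀ a x, 0 ≤ p a x) → ∑ a, ∑ x, p a x = 1 →
      MI (fun a b => ∑ x, p a x * W x b) ≤ c * MI p) :
    condMI (fun v a b => ∑ x, q v a x * W x b) ≤ c * condMI q := by
  rw [condMI, condMI, mul_sum]
  refine sum_le_sum fun v _ => ?_
  rw [sum_sum_comp (q v) hW]
  set m := ∑ a, ∑ x, q v a x
  rcases (show 0 ≤ m from sum_nonneg fun a _ => sum_nonneg fun x _ => hq v a x).eq_or_lt
    with hm | hm
  · rw [← hm, zero_mul, zero_mul, mul_zero]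
  have hnorm : (fun a b => (∑ x, q v a x * W x b) / m) = fun a b => ∑ x, q v a x / m * W x b := by
    simp_rw [sum_div, div_mul_eq_mul_div]
  rw [hnorm, mul_left_comm]
  exact mul_le_mul_of_nonneg_left
    (hc _ (fun a x => div_nonneg (hq v a x) hm.le) (sum_sum_div_self hm.ne')) hm.le

end ConditionalMutualInformation

theorem exists_channel_mul_eq {U X : Type} [Fintype U] [Nonempty U] {p : U → X → ℝ}
    (hp : ∀ u x, 0 ≤ p u x) :
    ∃ pu : X → U → ℝ, (∀ x, IsPMF (pu x)) ∧ ∀ u x, (∑ u', p u' x) * pu x u = p u x := by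
  classical
  obtain ⟨u₀⟩ := ‹Nonempty U›
  refine ⟨fun x u => if ∑ u', p u' x = 0 then if u = u₀ then 1 else 0
    else p u x / ∑ u', p u' x, fun x => ?_, fun u x => ?_⟩
  · by_cases hx : ∑ u', p u' x = 0
    · simp only [hx, if_true]
      exact ⟨fun u => by dsimp only; split_ifs <;> norm_num, by simp⟩
    · simp only [hx, if_false]
      exact ⟨fun u => div_nonneg (hp u x) (sum_nonneg fun u' _ => hp u' x),
        by rw [← sum_div, div_self hx]⟩
  · by_cases hx : ∑ u', p u' x = 0
    · rw [hx, zero_mul, eq_comm]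
      exact (sum_eq_zero_iff_of_nonneg fun u' _ => hp u' x).1 hx u (mem_univ u)
    · simp only [hx, if_false]
      exact mul_div_cancel₀ _ hx

section StrongDataProcessing

variable {X Y : Type} [Fintype X] [Fintype Y] {W : X → Y → ℝ}

theorem sdpc_ratio_le_one (hW : ∀ x, IsPMF (W x)) {qA : X → ℝ} (hqA : ∀ x, 0 ≤ qA x)
    {U : Type} [Fintype U] {pu : X → U → ℝ} (hpu : ∀ x, IsPMF (pu x))
    (hpos : 0 < MI (fun u x => qA x * pu x u)) :
    MI (fun u y => ∑ x, qA x * pu x u * W x y) / MI (fun u x => qA x * pu x u) ≤ 1 :=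
  div_le_one_of_le₀ (MI_comp_le (fun u x => mul_nonneg (hqA x) ((hpu x).1 u)) hW) hpos.le

theorem sdpc_le_one (hW : ∀ x, IsPMF (W x)) {qA : X → ℝ} (hqA : ∀ x, 0 ≤ qA x) :
    sdpc qA W ≤ 1 :=
  Real.sSup_le (by rintro _ ⟨U, iU, pu, hpu, hpos, rfl⟩; exact sdpc_ratio_le_one hW hqA hpu hpos)
    zero_le_one

theorem le_sdpc (hW : ∀ x, IsPMF (W x)) {qA : X → ℝ} (hqA : ∀ x, 0 ≤ qA x)
    {U : Type} [Fintype U] {pu : X → U → ℝ} (hpu : ∀ x, IsPMF (pu x))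
    (hpos : 0 < MI (fun u x => qA x * pu x u)) :
    MI (fun u y => ∑ x, qA x * pu x u * W x y) / MI (fun u x => qA x * pu x u) ≤ sdpc qA W :=
  le_csSup ⟨1, by rintro _ ⟨U, iU, pu, hpu, hpos, rfl⟩; exact sdpc_ratio_le_one hW hqA hpu hpos⟩
    ⟨U, _, pu, hpu, hpos, rfl⟩

theorem sdpc_nonneg (hW : ∀ x, IsPMF (W x)) {qA : X → ℝ} (hqA : IsPMF qA) : 0 ≤ sdpc qA W := by
  refine Real.sSup_nonneg ?_
  rintro _ ⟨U, iU, pu, hpu, hpos, rfl⟩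
  refine div_nonneg (MI_nonneg (fun u y => sum_nonneg fun x _ =>
    mul_nonneg (mul_nonneg (hqA.1 x) ((hpu x).1 u)) ((hW x).1 y)) ?_) hpos.le
  rw [sum_sum_comp _ fun x => (hW x).2, sum_comm]
  simp_rw [← mul_sum, fun x => (hpu x).2, mul_one]
  exact hqA.2

theorem eta_nonneg (hW : ∀ x, IsPMF (W x)) : 0 ≤ eta W :=
  Real.sSup_nonneg (by rintro _ ⟨qA, hqA, rfl⟩; exact sdpc_nonneg hW hqA)

theorem sdpc_le_eta (hW : ∀ x, IsPMF (W x)) {qA : X → ℝ} (hqA : IsPMF qA) : sdpc qA W ≤ eta W :=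
  le_csSup ⟨1, by rintro _ ⟨q, hq, rfl⟩; exact sdpc_le_one hW hq.1⟩ ⟨qA, hqA, rfl⟩

theorem MI_comp_le_eta_mul (hW : ∀ x, IsPMF (W x)) {U : Type} [Fintype U] {p : U → X → ℝ}
    (hp : ∀ u x, 0 ≤ p u x) (hp1 : ∑ u, ∑ x, p u x = 1) :
    MI (fun u y => ∑ x, p u x * W x y) ≤ eta W * MI p := by
  rcases (MI_nonneg hp hp1).eq_or_lt with h0 | hpos
  · rw [← h0, mul_zero, h0]
    exact MI_comp_le hp hW
  have : Nonempty U := by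
    by_contra h
    rw [not_nonempty_iff] at h
    simp at hp1
  obtain ⟨pu, hpu, hjoint⟩ := exists_channel_mul_eq hp
  have hqA : IsPMF fun x => ∑ u, p u x :=
    ⟨fun x => sum_nonneg fun u _ => hp u x, by rw [sum_comm]; exact hp1⟩
  have hratio := le_sdpc hW hqA.1 hpu (by simpa only [hjoint] using hpos)
  simp only [hjoint] at hratio
  calc MI (fun u y => ∑ x, p u x * W x y)
      = MI (fun u y => ∑ x, p u x * W x y) / MI p * MI p := (div_mul_cancel₀ _ hpos.ne').symm
    _ ≤ eta W * MI p :=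
        mul_le_mul_of_nonneg_right (hratio.trans (sdpc_le_eta hW hqA)) hpos.le

end StrongDataProcessing

theorem exists_pos_lt_one_forall_mul_le {ι : Type*} [Finite ι] (q p : ι → ℝ)
    (hp : ∀ i, 0 < p i) : ∃ t : ℝ, 0 < t ∧ t < 1 ∧ ∀ i, t * q i ≤ p i := by
  have hq : ∀ i, ∀ᶠ t in 𝓝 (0 : ℝ), t * q i < p i := fun i =>
    (continuous_id.mul continuous_const).continuousAt.eventually_lt continuousAt_const
      (by simpa using hp i)
  obtain ⟨t, ⟨ht1, htq⟩, ht0⟩ := ((((eventually_lt_nhds one_pos).and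
    (eventually_all.2 hq)).filter_mono nhdsWithin_le_nhds).and
    (self_mem_nhdsWithin : Set.Ioi (0 : ℝ) ∈ 𝓝[>] 0)).exists
  exact ⟨t, ht0, ht1, fun i => (htq i).le⟩

section Mixture

variable {U B : Type}

/-- With probability `t`, `V = true` and `(U, B)` is drawn from `p`; otherwise `V = false`,
`U = none` and `B` is drawn from `s`. As `V` is a function of `U`, the Markov condition holds. -/
def mixture (t : ℝ) (p : U → B → ℝ) (s : B → ℝ) : Bool → Option U → B → ℝ
  | true, some u, b => t * p u b
  | false, none, b => (1 - t) * s b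
  | _, _, _ => 0

variable {t : ℝ} {p : U → B → ℝ} {s : B → ℝ}

theorem mixture_eq_zero {v : Bool} {o : Option U} (h : v ≠ o.isSome) (b : B) :
    mixture t p s v o b = 0 := by
  cases v <;> cases o <;> simp_all [mixture]

theorem mixture_nonneg (ht0 : 0 ≤ t) (ht1 : t ≤ 1) (hp : ∀ u b, 0 ≤ p u b) (hs : ∀ b, 0 ≤ s b)
    (v : Bool) (o : Option U) (b : B) : 0 ≤ mixture t p s v o b := by
  cases v <;> cases o <;> simp only [mixture, le_refl]
  · exact mul_nonneg (sub_nonneg.2 ht1) (hs b)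
  · exact mul_nonneg ht0 (hp _ b)

theorem sum_sum_mixture [Fintype U] (b : B) :
    ∑ v, ∑ o, mixture t p s v o b = t * ∑ u, p u b + (1 - t) * s b := by
  simp [Fintype.sum_option, mixture, mul_sum, add_comm]

theorem mixture_markov [Fintype B] (v : Bool) (o : Option U) (b : B)
    (hpos : 0 < ∑ b', mixture t p s v o b') :
    mixture t p s v o b / ∑ b', mixture t p s v o b'
      = (∑ v', mixture t p s v' o b) / ∑ v', ∑ b', mixture t p s v' o b' := by
  obtain rfl : v = o.isSome := by
    by_contra h
    simp [mixture_eq_zero h] at hpos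
  have hz : ∀ v' ∈ univ, v' ≠ o.isSome → ∀ b, mixture t p s v' o b = 0 :=
    fun v' _ h => mixture_eq_zero h
  rw [sum_eq_single _ (fun v' hv' h => hz v' hv' h b) (by simp),
    sum_eq_single _ (fun v' hv' h => sum_eq_zero fun b _ => hz v' hv' h b) (by simp)]

theorem mixture_comp [Fintype B] {C : Type} (W : B → C → ℝ) :
    (fun v o c => ∑ b, mixture t p s v o b * W b c)
      = mixture t (fun u c => ∑ b, p u b * W b c) (fun c => ∑ b, s b * W b c) := by
  funext v o c
  cases v <;> cases o <;> simp [mixture, mul_sum, mul_assoc]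

theorem condMI_mixture [Fintype U] [Fintype B] (ht0 : 0 < t) (ht1 : t < 1)
    (hp : ∑ u, ∑ b, p u b = 1) (hs : ∑ b, s b = 1) : condMI (mixture t p s) = t * MI p := by
  have hmass_true : ∑ o, ∑ b, mixture t p s true o b = t := by
    simp [Fintype.sum_option, mixture, ← mul_sum, hp]
  have hmass_false : ∑ o, ∑ b, mixture t p s false o b = 1 - t := by
    simp [Fintype.sum_option, mixture, ← mul_sum, hs]
  have hMI_true : MI (fun o b => mixture t p s true o b / t) = MI p := by
    rw [MI_option fun b => by simp [mixture]]
    congr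
    funext u b
    exact mul_div_cancel_left₀ _ ht0.ne'
  have hMI_false : MI (fun o b => mixture t p s false o b / (1 - t)) = 0 := by
    have hsplit : (fun o b => mixture t p s false o b / (1 - t))
        = fun o b => (Option.elim o 1 fun _ => 0 : ℝ) * s b := by
      funext o b
      cases o <;> simp [mixture, mul_div_cancel_left₀ _ (sub_pos.2 ht1).ne']
    rw [hsplit]
    exact MI_mul_eq_zero (by simp [Fintype.sum_option]) hs
  rw [condMI, Fintype.sum_bool, hmass_true, hmass_false, hMI_true, hMI_false, mul_zero, add_zero]

end Mixture

section MarkovRatios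

variable {X Y : Type} [Fintype X] [Fintype Y] {W : X → Y → ℝ} {pX : X → ℝ}

def condMIRatios (W : X → Y → ℝ) (pX : X → ℝ) : Set ℝ :=
  { r : ℝ | ∃ (V U : Type) (iV : Fintype V) (iU : Fintype U)
        (q : V → U → X → ℝ), by
      letI := iV; letI := iU
      exact (∀ v u x, 0 ≤ q v u x) ∧
        (∑ v, ∑ u, ∑ x, q v u x) = 1 ∧
        (∀ x, ∑ v, ∑ u, q v u x = pX x) ∧
        (∀ v u x, 0 < (∑ x', q v u x') →
          q v u x / (∑ x', q v u x')
            = (∑ v', q v' u x) / (∑ v', ∑ x', q v' u x')) ∧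
        0 < condMI (fun v u x => q v u x) ∧
        r = condMI (fun v u y => ∑ x, q v u x * W x y)
              / condMI (fun v u x => q v u x) }

theorem nonneg_of_mem_condMIRatios (hW : ∀ x, IsPMF (W x)) {r : ℝ}
    (hr : r ∈ condMIRatios W pX) : 0 ≤ r := by
  obtain ⟨V, U, iV, iU, q, hq, -, -, -, hpos, rfl⟩ := hr
  exact div_nonneg (condMI_nonneg fun v u y => sum_nonneg fun x _ =>
    mul_nonneg (hq v u x) ((hW x).1 y)) hpos.le

theorem le_eta_of_mem_condMIRatios (hW : ∀ x, IsPMF (W x)) {r : ℝ}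
    (hr : r ∈ condMIRatios W pX) : r ≤ eta W := by
  obtain ⟨V, U, iV, iU, q, hq, -, -, -, hpos, rfl⟩ := hr
  rw [div_le_iff₀ hpos]
  exact condMI_comp_le_mul hq (fun x => (hW x).2) fun p hp hp1 => MI_comp_le_eta_mul hW hp hp1

theorem sdpc_ratio_mem_condMIRatios (hW : ∀ x, ∑ y, W x y = 1) (hpX : IsPMF pX)
    (hpos : ∀ x, 0 < pX x) {qA : X → ℝ} (hqA : IsPMF qA) {U : Type} [Fintype U] {pu : X → U → ℝ}
    (hpu : ∀ x, IsPMF (pu x)) (hMI : 0 < MI (fun u x => qA x * pu x u)) :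
    MI (fun u y => ∑ x, qA x * pu x u * W x y) / MI (fun u x => qA x * pu x u)
      ∈ condMIRatios W pX := by
  obtain ⟨t, ht0, ht1, htq⟩ := exists_pos_lt_one_forall_mul_le qA pX hpos
  have ht1' : 1 - t ≠ 0 := (sub_pos.2 ht1).ne'
  set p : U → X → ℝ := fun u x => qA x * pu x u
  set s : X → ℝ := fun x => (pX x - t * qA x) / (1 - t)
  have hp_marg : ∀ x, ∑ u, p u x = qA x := fun x => by
    simp only [p, ← mul_sum, (hpu x).2, mul_one]
  have hp1 : ∑ u, ∑ x, p u x = 1 := by rw [sum_comm]; simp only [hp_marg, hqA.2]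
  have hs1 : ∑ x, s x = 1 := by
    rw [← sum_div, sum_sub_distrib, ← mul_sum, hpX.2, hqA.2, mul_one, div_self ht1']
  have hmarg : ∀ x, ∑ v, ∑ o, mixture t p s v o x = pX x := fun x => by
    rw [sum_sum_mixture, hp_marg, mul_div_cancel₀ _ ht1']
    ring
  refine ⟨Bool, Option U, inferInstance, inferInstance, mixture t p s,
    mixture_nonneg ht0.le ht1.le (fun u x => mul_nonneg (hqA.1 x) ((hpu x).1 u))
      (fun x => div_nonneg (sub_nonneg.2 (htq x)) (sub_pos.2 ht1).le),
    ?_, hmarg, mixture_markov, ?_, ?_⟩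
  · rw [← hpX.2]
    simp_rw [← hmarg]
    rw [sum_comm (s := univ (α := X))]
    exact sum_congr rfl fun v _ => sum_comm
  · rw [condMI_mixture ht0 ht1 hp1 hs1]
    exact mul_pos ht0 hMI
  · rw [mixture_comp, condMI_mixture ht0 ht1 hp1 hs1, condMI_mixture ht0 ht1 _ _,
      mul_div_mul_left _ _ ht0.ne']
    · rwa [sum_sum_comp _ hW]
    · rw [sum_comm]
      simp_rw [← mul_sum, hW, mul_one]
      exact hs1

end MarkovRatios

/-- for a channel `W` from `X` to `Y` and a strictly positive input pmf
`p_X`, `η(W)` equals the supremum over finite `V, U` and joint pmfs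
`p(v,u,x,y) = p(v,u,x)·W(y|x)` with `X`-marginal `p_X` satisfying the Markov chain
`V → U → X` (i.e. `p(x|v,u) = p(x|u)` whenever defined) and `I(U;X|V) > 0`, of
`I(U;Y|V)/I(U;X|V)`. -/
theorem eta_eq_sup_condMI_ratio {X Y : Type} [Fintype X] [Fintype Y]
    (W : X → Y → ℝ) (hW : ∀ x, IsPMF (W x))
    (pX : X → ℝ) (hpX : IsPMF pX) (hpos : ∀ x, 0 < pX x) :
    eta W = sSup { r : ℝ | ∃ (V U : Type) (iV : Fintype V) (iU : Fintype U)
        (q : V → U → X → ℝ), by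
      letI := iV; letI := iU
      exact (∀ v u x, 0 ≤ q v u x) ∧
        (∑ v, ∑ u, ∑ x, q v u x) = 1 ∧
        (∀ x, ∑ v, ∑ u, q v u x = pX x) ∧
        (∀ v u x, 0 < (∑ x', q v u x') →
          q v u x / (∑ x', q v u x')
            = (∑ v', q v' u x) / (∑ v', ∑ x', q v' u x')) ∧
        0 < condMI (fun v u x => q v u x) ∧
        r = condMI (fun v u y => ∑ x, q v u x * W x y)
              / condMI (fun v u x => q v u x) } := by
  change eta W = sSup (condMIRatios W pX)
  have hbdd : BddAbove (condMIRatios W pX) := ⟨eta W, fun r => le_eta_of_mem_condMIRatios hW⟩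
  have hsup_nonneg : 0 ≤ sSup (condMIRatios W pX) :=
    Real.sSup_nonneg fun r => nonneg_of_mem_condMIRatios hW
  refine le_antisymm (Real.sSup_le ?_ hsup_nonneg)
    (Real.sSup_le (fun r => le_eta_of_mem_condMIRatios hW) (eta_nonneg hW))
  rintro _ ⟨qA, hqA, rfl⟩
  refine Real.sSup_le ?_ hsup_nonneg
  rintro _ ⟨U, iU, pu, hpu, hMI, rfl⟩
  exact le_csSup hbdd (sdpc_ratio_mem_condMIRatios (fun x => (hW x).2) hpX hpos hqA hpu hMI)
end

section
/- Let X, Y be finite sets and let μ, γ be pmfs on X×Y with equal marginals. Then there exist k ≥ 1, pairwise distinct x₁,…,x_k ∈ X and pairwise distinct y₁,…,y_k ∈ Y such that γ(x_i, y_i) > 0 for all 1 ≤ i ≤ k, μ(x₁, y_k) > 0, and μ(x_i, y_{i−1}) > 0 for all 2 ≤ i ≤ k. -/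
/-- A pair of pmfs on `X × Y` has equal marginals. -/
def EqualMarginals {X Y : Type*} [Fintype X] [Fintype Y] (μ γ : X × Y → ℝ) : Prop :=
  (∀ x, ∑ y, μ (x, y) = ∑ y, γ (x, y)) ∧ (∀ y, ∑ x, μ (x, y) = ∑ x, γ (x, y))

open Function

theorem Function.exists_iterate_mem_periodicPts {α : Type*} [Finite α] (f : α → α) (x : α) :
    ∃ n, f^[n] x ∈ periodicPts f := by
  obtain ⟨a, b, hne, heq⟩ := Finite.exists_ne_map_eq_of_infinite (f^[·] x)
  wlog hab : a < b generalizing a b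
  · exact this b a hne.symm heq.symm (by omega)
  refine ⟨a, mk_mem_periodicPts (Nat.sub_pos_of_lt hab) ?_⟩
  simp only [IsPeriodicPt, IsFixedPt, ← iterate_add_apply, Nat.sub_add_cancel hab.le]
  exact heq.symm

theorem Function.exists_injective_cycle {α : Type*} [Finite α] [Nonempty α] (f : α → α) :
    ∃ (m : ℕ) (x : Fin (m + 1) → α), Injective x ∧ ∀ i, f (x (i - 1)) = x i := by
  obtain ⟨n, hx₀⟩ := exists_iterate_mem_periodicPts f (Classical.arbitrary α)
  set x₀ := f^[n] (Classical.arbitrary α)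
  obtain ⟨m, hm⟩ :=
    Nat.exists_eq_add_one_of_ne_zero (minimalPeriod_pos_of_mem_periodicPts hx₀).ne'
  have mem_Iio (i : Fin (m + 1)) : (i : ℕ) ∈ Set.Iio (minimalPeriod f x₀) := by
    rw [Set.mem_Iio, hm]; exact i.is_lt
  refine ⟨m, fun i => f^[i] x₀, fun i j hij => Fin.ext ?_, fun i => ?_⟩
  · exact iterate_injOn_Iio_minimalPeriod (mem_Iio i) (mem_Iio j) hij
  · dsimp only
    rw [← iterate_succ_apply' f, ← iterate_mod_minimalPeriod_eq, hm, Fin.coe_sub_one]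
    split_ifs with hi
    · simp [hi]
    · have hi : (i : ℕ) ≠ 0 := fun h0 => hi (Fin.ext h0)
      rw [Nat.succ_eq_add_one, Nat.sub_add_cancel (Nat.one_le_iff_ne_zero.mpr hi),
        Nat.mod_eq_of_lt i.is_lt]

theorem Function.exists_alternating_cycle {α β : Type*} [Finite α] [Nonempty α]
    (g : α → β) (h : β → α) :
    ∃ (m : ℕ) (x : Fin (m + 1) → α),
      Injective x ∧ Injective (g ∘ x) ∧ ∀ i, h (g (x (i - 1))) = x i := by
  obtain ⟨m, x, hx, hcycle⟩ := exists_injective_cycle (h ∘ g)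
  refine ⟨m, x, hx, fun i j hij => ?_, hcycle⟩
  have hsucc : x (i + 1) = x (j + 1) := by
    rw [← hcycle (i + 1), ← hcycle (j + 1), add_sub_cancel_right, add_sub_cancel_right]
    exact congrArg h hij
  exact add_right_cancel (hx hsucc)

theorem exists_pos_with_colSum_pos {ι κ : Type*} [Fintype ι] [Fintype κ]
    (p q : ι → κ → ℝ) (hp : ∀ i k, 0 ≤ p i k) (hpq : ∀ k, ∑ i, p i k = ∑ i, q i k)
    {i : ι} (hi : 0 < ∑ k, p i k) : ∃ k, 0 < p i k ∧ 0 < ∑ i', q i' k := by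
  obtain ⟨k, -, hk⟩ := (Finset.sum_pos_iff_of_nonneg fun k _ => hp i k).mp hi
  refine ⟨k, hk, ?_⟩
  rw [← hpq]
  exact hk.trans_le (Finset.single_le_sum (fun i' _ => hp i' k) (Finset.mem_univ i))

theorem IsPMF.exists_rowSum_pos {X Y : Type*} [Fintype X] [Fintype Y] {γ : X × Y → ℝ}
    (hγ : IsPMF γ) : ∃ x, 0 < ∑ y, γ (x, y) := by
  have htotal : 0 < ∑ x, ∑ y, γ (x, y) := by
    rw [← Fintype.sum_prod_type', hγ.2]; exact one_pos
  obtain ⟨x, -, hx⟩ := (Finset.sum_pos_iff_of_nonneg fun x _ =>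
    Finset.sum_nonneg fun y _ => hγ.1 (x, y)).mp htotal
  exact ⟨x, hx⟩

/-- if `μ, γ` are pmfs on `X × Y` with equal marginals, then there exist
`k = m+1 ≥ 1`, pairwise distinct `x₁,…,x_k` and pairwise distinct `y₁,…,y_k` with
`γ(x_i,y_i) > 0` for all `i`, `μ(x₁,y_k) > 0`, and `μ(x_i,y_{i−1}) > 0` for
`2 ≤ i ≤ k` (the latter two conditions are expressed with cyclic subtraction in
`Fin (m+1)`, so `i = 1` refers to `μ(x₁,y_k)`). -/
theorem exists_positive_path {X Y : Type*} [Fintype X] [Fintype Y]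
    (μ γ : X × Y → ℝ) (hμ : IsPMF μ) (hγ : IsPMF γ) (hm : EqualMarginals μ γ) :
    ∃ (m : ℕ) (x : Fin (m + 1) → X) (y : Fin (m + 1) → Y),
      Function.Injective x ∧ Function.Injective y ∧
      (∀ i, 0 < γ (x i, y i)) ∧ (∀ i, 0 < μ (x i, y (i - 1))) := by
  let X' := {x // 0 < ∑ y, γ (x, y)}
  let Y' := {y // 0 < ∑ x, μ (x, y)}
  have hg (x : X') : ∃ y : Y', 0 < γ (x.1, y.1) := by
    obtain ⟨y, hxy, hy⟩ := exists_pos_with_colSum_pos (fun x y => γ (x, y))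
      (fun x y => μ (x, y)) (fun _ _ => hγ.1 _) (fun y => (hm.2 y).symm) x.2
    exact ⟨⟨y, hy⟩, hxy⟩
  have hh (y : Y') : ∃ x : X', 0 < μ (x.1, y.1) := by
    obtain ⟨x, hxy, hx⟩ := exists_pos_with_colSum_pos (fun y x => μ (x, y))
      (fun y x => γ (x, y)) (fun _ _ => hμ.1 _) hm.1 y.2
    exact ⟨⟨x, hx⟩, hxy⟩
  choose g hg using hg
  choose h hh using hh
  obtain ⟨x₀, hx₀⟩ := hγ.exists_rowSum_pos
  have : Nonempty X' := ⟨⟨x₀, hx₀⟩⟩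
  obtain ⟨m, x, hx, hgx, hcycle⟩ := exists_alternating_cycle g h
  refine ⟨m, fun i => (x i).1, fun i => (g (x i)).1, Subtype.val_injective.comp hx,
    Subtype.val_injective.comp hgx, fun i => hg _, fun i => ?_⟩
  show 0 < μ ((x i).1, (g (x (i - 1))).1)
  rw [← hcycle i]
  exact hh _
end
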